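/- arXiv:2005.13444 — 3 statements merged into one kernel-verified Lean document; each statement's English description precedes it below -/
import Mathlib

section
/- In U(gl(N))^{⊗L}, for any d ≥ 1 and any a_1,…,a_d ∈ {1,…,L}, the polarised trace T^{(a_1,…,a_d)} = Σ e_{i_2 i_1}^{(a_1)} e_{i_3 i_2}^{(a_2)} ⋯ e_{i_1 i_d}^{(a_d)} (summation over i_1,…,i_d from 1 to N) commutes with δ(e_{pq}) for all 1 ≤ p,q ≤ N. -/
/-!
Let `E_c` be the matrix over `U` whose `(x, y)` entry is `e_{yx}^{(c)}`; the polarised trace is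
then `tr (E_{a_1} ⋯ E_{a_d})`. The `gl(N)` relations in leg `c`, together with the commutation of
distinct legs, amount to `E_c` commuting with `Y = D·1 + ε_{pq}`, where `D = δ(e_{pq})` and
`ε_{pq}` is the scalar matrix unit. Hence the product `P = E_{a_1} ⋯ E_{a_d}` commutes with `Y`,
and taking the trace of `P Y = Y P` gives `tr P · D + P_{qp} = D · tr P + P_{qp}`.
-/

open Matrix

theorem Fin.snoc_eq_cons_add_one {β : Type*} {n : ℕ} (j : Fin n → β) (x : β) (s : Fin (n + 1)) :
    (Fin.snoc j x : Fin (n + 1) → β) s = (Fin.cons x j : Fin (n + 1) → β) (s + 1) := by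
  induction s using Fin.lastCases with
  | last => simp [Fin.last_add_one]
  | cast k => simp [Fin.coeSucc_eq_succ]

namespace Matrix

variable {ι R : Type*} [Fintype ι] [DecidableEq ι]

section Semiring

variable [Semiring R]

theorem list_ofFn_prod_apply : ∀ {m : ℕ} (M : Fin (m + 1) → Matrix ι ι R) (x y : ι),
    (List.ofFn M).prod x y = ∑ j : Fin m → ι,
      (List.ofFn fun s => M s ((Fin.cons x j : Fin (m + 1) → ι) s)
        ((Fin.snoc j y : Fin (m + 1) → ι) s)).prod
  | 0, M, x, y => by simp [Fin.snoc]
  | m + 1, M, x, y => by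
    rw [List.ofFn_succ, List.prod_cons, mul_apply,
      ← (Fin.consEquiv fun _ => ι).sum_comp, Fintype.sum_prod_type]
    refine Finset.sum_congr rfl fun z _ => ?_
    rw [list_ofFn_prod_apply, Finset.mul_sum]
    refine Finset.sum_congr rfl fun j _ => ?_
    simp only [List.ofFn_succ (n := m + 1), List.prod_cons, Fin.consEquiv, Equiv.coe_fn_mk,
      ← Fin.cons_snoc_eq_snoc_cons, Fin.cons_zero, Fin.cons_succ]

theorem trace_list_ofFn_prod {n : ℕ} (M : Fin (n + 1) → Matrix ι ι R) :
    trace (List.ofFn M).prod =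
      ∑ i : Fin (n + 1) → ι, (List.ofFn fun s => M s (i s) (i (s + 1))).prod := by
  simp only [trace, diag_apply, list_ofFn_prod_apply]
  rw [← Fintype.sum_prod_type', ← (Fin.consEquiv fun _ => ι).sum_comp]
  simp [Fin.consEquiv, Fin.snoc_eq_cons_add_one]

theorem trace_mul_diagonal_const (P : Matrix ι ι R) (d : R) :
    trace (P * diagonal fun _ => d) = trace P * d := by
  simp [trace, Finset.sum_mul]

theorem trace_diagonal_const_mul (P : Matrix ι ι R) (d : R) :
    trace ((diagonal fun _ => d) * P) = d * trace P := by
  simp [trace, Finset.mul_sum]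

end Semiring

theorem commute_trace_of_commute_diagonal_add_single [Ring R] {P : Matrix ι ι R} {d : R}
    (p q : ι) (h : Commute P (diagonal (fun _ => d) + single p q 1)) : Commute (trace P) d := by
  have := congrArg trace h.eq
  rwa [mul_add, add_mul, trace_add, trace_add, trace_mul_single, trace_single_mul,
    trace_mul_diagonal_const, trace_diagonal_const_mul, MulOpposite.op_one, one_smul, one_smul,
    add_left_inj] at this

end Matrix

section GeneratorMatrix

variable {U : Type*} [Ring U] {L N : ℕ}

def genMatrix (e : Fin L → Fin N → Fin N → U) (c : Fin L) : Matrix (Fin N) (Fin N) U :=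
  Matrix.of fun x y => e c y x

theorem mul_sum_sub_sum_mul {e : Fin L → Fin N → Fin N → U}
    (hrel : ∀ (a : Fin L) (p q r s : Fin N),
      e a p q * e a r s - e a r s * e a p q =
        (if q = r then e a p s else 0) - (if s = p then e a r q else 0))
    (hcomm : ∀ (a b : Fin L), a ≠ b → ∀ (p q r s : Fin N),
      e a p q * e b r s = e b r s * e a p q) (c : Fin L) (x y p q : Fin N) :
    e c x y * (∑ c', e c' p q) - (∑ c', e c' p q) * e c x y =
      (if y = p then e c x q else 0) - (if q = x then e c p y else 0) := by
  rw [Finset.mul_sum, Finset.sum_mul, ← Finset.sum_sub_distrib,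
    Finset.sum_eq_single_of_mem c (Finset.mem_univ c) fun c' _ hc' => by
      rw [hcomm c c' hc'.symm, sub_self]]
  exact hrel c x y p q

theorem commute_genMatrix_diagonal_add_single {e : Fin L → Fin N → Fin N → U}
    (hrel : ∀ (a : Fin L) (p q r s : Fin N),
      e a p q * e a r s - e a r s * e a p q =
        (if q = r then e a p s else 0) - (if s = p then e a r q else 0))
    (hcomm : ∀ (a b : Fin L), a ≠ b → ∀ (p q r s : Fin N),
      e a p q * e b r s = e b r s * e a p q) (c : Fin L) (p q : Fin N) :
    Commute (genMatrix e c) (diagonal (fun _ => ∑ c', e c' p q) + single p q 1) := by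
  ext x y
  have h := mul_sum_sub_sum_mul hrel hcomm c y x p q
  rw [sub_eq_sub_iff_add_eq_add] at h
  simp only [genMatrix, diagonal, single, ite_and, of_add_of, mul_apply, of_apply, Pi.add_apply,
    mul_add, add_mul, mul_ite, ite_mul, mul_zero, zero_mul, mul_one, one_mul,
    Finset.sum_add_distrib, Finset.sum_ite_eq, Finset.sum_ite_eq', Finset.mem_univ, ↓reduceIte,
    Finset.sum_ite_irrel, Finset.sum_const_zero]
  simp_rw [h, add_comm, @eq_comm _ x p]

end GeneratorMatrix

theorem polarised_trace_commutes_general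
    (U : Type*) [Ring U] (L N n : ℕ)
    (e : Fin L → Fin N → Fin N → U)
    (hrel : ∀ (a : Fin L) (p q r s : Fin N),
      e a p q * e a r s - e a r s * e a p q =
        (if q = r then e a p s else 0) - (if s = p then e a r q else 0))
    (hcomm : ∀ (a b : Fin L), a ≠ b → ∀ (p q r s : Fin N),
      e a p q * e b r s = e b r s * e a p q)
    (a : Fin (n + 1) → Fin L) :
    ∀ p q : Fin N,
      (∑ i : Fin (n + 1) → Fin N,
          ((List.finRange (n + 1)).map (fun s => e (a s) (i (s + 1)) (i s))).prod) *
          (∑ c : Fin L, e c p q) =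
        (∑ c : Fin L, e c p q) *
          (∑ i : Fin (n + 1) → Fin N,
            ((List.finRange (n + 1)).map (fun s => e (a s) (i (s + 1)) (i s))).prod) := by
  intro p q
  have htrace : ∑ i : Fin (n + 1) → Fin N,
      ((List.finRange (n + 1)).map (fun s => e (a s) (i (s + 1)) (i s))).prod =
        trace (List.ofFn fun s => genMatrix e (a s)).prod := by
    rw [trace_list_ofFn_prod]
    simp only [genMatrix, of_apply, List.ofFn_eq_map]
  rw [htrace]
  refine commute_trace_of_commute_diagonal_add_single p q (Commute.list_prod_left _ _ ?_)
  simp only [List.mem_ofFn, forall_exists_index]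
  rintro _ s rfl
  exact commute_genMatrix_diagonal_add_single hrel hcomm (a s) p q

/-- For any `d ≥ 1` (written `d = n+1`) and any choice of tensor legs
`a : Fin (n+1) → Fin L`, the polarised trace
`T^{(a_1,…,a_d)} = ∑ e_{i_2 i_1}^{(a_1)} e_{i_3 i_2}^{(a_2)} ⋯ e_{i_1 i_d}^{(a_d)}`
commutes with `δ(e_{pq}) = ∑_c e_{pq}^{(c)}`. The `s`-th factor (0-indexed) is
`e (a s) (i (s+1)) (i s)` with cyclic index `s+1` in `Fin (n+1)`. -/
theorem polarised_trace_commutes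
    (U : Type*) [Ring U] [Algebra ℂ U] (L N n : ℕ)
    (e : Fin L → Fin N → Fin N → U)
    (hrel : ∀ (a : Fin L) (p q r s : Fin N),
      e a p q * e a r s - e a r s * e a p q =
        (if q = r then e a p s else 0) - (if s = p then e a r q else 0))
    (hcomm : ∀ (a b : Fin L), a ≠ b → ∀ (p q r s : Fin N),
      e a p q * e b r s = e b r s * e a p q)
    (a : Fin (n + 1) → Fin L) :
    ∀ p q : Fin N,
      (∑ i : Fin (n + 1) → Fin N,
          ((List.finRange (n + 1)).map (fun s => e (a s) (i (s + 1)) (i s))).prod) *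
          (∑ c : Fin L, e c p q) =
        (∑ c : Fin L, e c p q) *
          (∑ i : Fin (n + 1) → Fin N,
            ((List.finRange (n + 1)).map (fun s => e (a s) (i (s + 1)) (i s))).prod) :=
  polarised_trace_commutes_general U L N n e hrel hcomm a
end

section
/- In the algebra A^{gen} over ℂ[a_0, a'_0, a_1, a_2, a_3, a_4, a_5, a_6, a_8, a_9] with relations [A,B]=C, [A,C]= a_0B² + a_1{A,B} + a_2A² + a_4B + a_5A + a_8, [B,C]= a'_0A³ − a_1B² − a_2{A,B} + a_3A² − a_5B + a_6A + a_9, the element Ω = x_1 A + x_2 B + x_3 A² + x_4{A,B} + x_5 B² + x_6 A³ + x_7 ABA + x_8 BC − x_8 AB² + x_9 A⁴ + x_{10} B³ + C², with x_1 = (1/6)(12a_9 + 3a_0a_5a'_0 + 2a_4a_3 − a_4a'_0a_1 − 6a_6a_1), x_2 = (1/3)(−6a_8 − 3a_4a_2 + a_0a_4a'_0 + a_0a_6 + 6a_5a_1), x_3 = (1/6)(6a_6 + 3a_4a'_0 + 3a_0a_2a'_0 − 4a_3a_1 − a'_0a_1²), x_4 = (1/3)(−3a_5 + a_0a_3 +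 3a_2a_1 + a_0a'_0a_1), x_5 = (1/3)(−3a_4 − 4a_0a_2 + a_0²a'_0 + 6a_1²), x_6 = (1/3)(2a_3 − a'_0a_1), x_7 = −2a_2 + a_0a'_0, x_8 = 2a_1, x_9 = a'_0/2, x_{10} = −(2/3)a_0, is central: it commutes with A, B, and C. -/
/-!
Regard the parameters as scalars from the centre of `U`. The three relations rewrite every word in
`A, B, C` as a combination of ordered words `C^i B^j A^k` with coefficients polynomial in the
parameters, and in this normal form the commutators of `6 Ω` with `A` and with `B` vanish
coefficientwise. Commuting with `A` and `B`, `6 Ω` also commutes with `C = AB - BA`.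
-/

structure AgenParams (R : Type*) where
  a0 : R
  a0' : R
  a1 : R
  a2 : R
  a3 : R
  a4 : R
  a5 : R
  a6 : R
  a8 : R
  a9 : R

namespace AgenParams

variable {R U : Type*} [CommRing R] [Ring U] [Algebra R U] (p : AgenParams R)

structure Relations (A B C : U) : Prop where
  bracket_AB : A * B - B * A = C
  bracket_AC : A * C - C * A =
    p.a0 • B ^ 2 + p.a1 • (A * B + B * A) + p.a2 • A ^ 2 + p.a4 • B + p.a5 • A + p.a8 • 1
  bracket_BC : B * C - C * B =
    p.a0' • A ^ 3 - p.a1 • B ^ 2 - p.a2 • (A * B + B * A) + p.a3 • A ^ 2 - p.a5 • B +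
      p.a6 • A + p.a9 • 1

/-- `6 Ω`, whose coefficients have no denominators and so make sense over any `R`. -/
def casimirNumerator (A B C : U) : U :=
  (12 * p.a9 + 3 * p.a0 * p.a5 * p.a0' + 2 * p.a4 * p.a3 - p.a4 * p.a0' * p.a1 -
      6 * p.a6 * p.a1) • A +
    (2 * (-(6 * p.a8) - 3 * p.a4 * p.a2 + p.a0 * p.a4 * p.a0' + p.a0 * p.a6 +
      6 * p.a5 * p.a1)) • B +
    (6 * p.a6 + 3 * p.a4 * p.a0' + 3 * p.a0 * p.a2 * p.a0' - 4 * p.a3 * p.a1 -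
      p.a0' * p.a1 ^ 2) • A ^ 2 +
    (2 * (-(3 * p.a5) + p.a0 * p.a3 + 3 * p.a2 * p.a1 + p.a0 * p.a0' * p.a1)) • (A * B + B * A) +
    (2 * (-(3 * p.a4) - 4 * p.a0 * p.a2 + p.a0 ^ 2 * p.a0' + 6 * p.a1 ^ 2)) • B ^ 2 +
    (2 * (2 * p.a3 - p.a0' * p.a1)) • A ^ 3 +
    (6 * (-(2 * p.a2) + p.a0 * p.a0')) • (A * B * A) +
    (12 * p.a1) • (B * C) - (12 * p.a1) • (A * B ^ 2) +
    (3 * p.a0') • A ^ 4 - (4 * p.a0) • B ^ 3 + (6 : R) • C ^ 2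

variable {p} {A B C : U}

namespace Relations

variable (h : p.Relations A B C)
include h

theorem A_mul_B : A * B = B * A + C := sub_eq_iff_eq_add'.mp h.bracket_AB

theorem A_mul_C : A * C = C * A +
    (p.a0 • B ^ 2 + p.a1 • (A * B + B * A) + p.a2 • A ^ 2 + p.a4 • B + p.a5 • A + p.a8 • 1) :=
  sub_eq_iff_eq_add'.mp h.bracket_AC

theorem B_mul_C : B * C = C * B +
    (p.a0' • A ^ 3 - p.a1 • B ^ 2 - p.a2 • (A * B + B * A) + p.a3 • A ^ 2 - p.a5 • B +
      p.a6 • A + p.a9 • 1) :=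
  sub_eq_iff_eq_add'.mp h.bracket_BC

set_option maxHeartbeats 1000000 in
theorem commute_casimirNumerator_A_B :
    Commute (p.casimirNumerator A B C) A ∧ Commute (p.casimirNumerator A B C) B := by
  have assoc {a b c : U} (e : a * b = c) (x : U) : a * (b * x) = c * x := by rw [← mul_assoc, e]
  constructor <;>
  · unfold casimirNumerator Commute SemiconjBy
    simp only [pow_succ, pow_zero, one_mul, mul_add, add_mul, mul_sub, sub_mul, smul_mul_assoc,
      mul_smul_comm, smul_add, smul_sub, smul_smul, mul_assoc, mul_one, h.A_mul_B, h.A_mul_C,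
      h.B_mul_C, assoc h.A_mul_B, assoc h.A_mul_C, assoc h.B_mul_C]
    module

theorem commute_casimirNumerator_C : Commute (p.casimirNumerator A B C) C := by
  obtain ⟨hA, hB⟩ := h.commute_casimirNumerator_A_B
  simpa only [h.bracket_AB] using (hA.mul_right hB).sub_right (hB.mul_right hA)

end Relations

end AgenParams

open AgenParams in
/-- the Casimir element `Ω` of the algebra `𝒜^{gen}`. In any associative
algebra with elements `A, B, C` and central parameters `a₀, a₀', a₁, …, a₉` satisfying
the defining relations of `𝒜^{gen}`, the element `Ω` (with the explicit coefficients
`x₁, …, x₁₀`) commutes with `A`, `B` and `C`. -/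
theorem Agen_casimir_central
    (U : Type*) [Ring U] [Algebra ℂ U]
    (A B C a0 a0' a1 a2 a3 a4 a5 a6 a8 a9 : U)
    (hcen : ∀ p ∈ ({a0, a0', a1, a2, a3, a4, a5, a6, a8, a9} : Set U),
      ∀ x : U, p * x = x * p)
    (r1 : A * B - B * A = C)
    (r2 : A * C - C * A =
      a0 * B ^ 2 + a1 * (A * B + B * A) + a2 * A ^ 2 + a4 * B + a5 * A + a8)
    (r3 : B * C - C * B =
      a0' * A ^ 3 - a1 * B ^ 2 - a2 * (A * B + B * A) + a3 * A ^ 2 - a5 * B +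
        a6 * A + a9)
    (x1 x2 x3 x4 x5 x6 x7 x8 x9 x10 Ω : U)
    (hx1 : x1 = (1/6 : ℂ) •
      (12 * a9 + 3 * a0 * a5 * a0' + 2 * a4 * a3 - a4 * a0' * a1 - 6 * a6 * a1))
    (hx2 : x2 = (1/3 : ℂ) •
      (-(6 * a8) - 3 * a4 * a2 + a0 * a4 * a0' + a0 * a6 + 6 * a5 * a1))
    (hx3 : x3 = (1/6 : ℂ) •
      (6 * a6 + 3 * a4 * a0' + 3 * a0 * a2 * a0' - 4 * a3 * a1 - a0' * a1 ^ 2))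
    (hx4 : x4 = (1/3 : ℂ) •
      (-(3 * a5) + a0 * a3 + 3 * a2 * a1 + a0 * a0' * a1))
    (hx5 : x5 = (1/3 : ℂ) •
      (-(3 * a4) - 4 * a0 * a2 + a0 ^ 2 * a0' + 6 * a1 ^ 2))
    (hx6 : x6 = (1/3 : ℂ) • (2 * a3 - a0' * a1))
    (hx7 : x7 = -(2 * a2) + a0 * a0')
    (hx8 : x8 = 2 * a1)
    (hx9 : x9 = (1/2 : ℂ) • a0')
    (hx10 : x10 = -((2/3 : ℂ) • a0))
    (hΩ : Ω = x1 * A + x2 * B + x3 * A ^ 2 + x4 * (A * B + B * A) + x5 * B ^ 2 +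
      x6 * A ^ 3 + x7 * (A * B * A) + x8 * (B * C) - x8 * (A * B ^ 2) +
      x9 * A ^ 4 + x10 * B ^ 3 + C ^ 2) :
    Ω * A = A * Ω ∧ Ω * B = B * Ω ∧ Ω * C = C * Ω := by
  simp only [Set.mem_insert_iff, Set.mem_singleton_iff, forall_eq_or_imp, forall_eq] at hcen
  obtain ⟨h0, h0', h1, h2, h3, h4, h5, h6, h8, h9⟩ := hcen
  let z (a : U) (ha : ∀ x, a * x = x * a) : Subring.center U :=
    ⟨a, Subring.mem_center_iff.mpr fun x => (ha x).symm⟩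
  let p : AgenParams (Subring.center U) :=
    ⟨z a0 h0, z a0' h0', z a1 h1, z a2 h2, z a3 h3, z a4 h4, z a5 h5, z a6 h6, z a8 h8, z a9 h9⟩
  have hp : p.Relations A B C := by
    refine ⟨r1, ?_, ?_⟩
    · simpa only [p, z, Subring.smul_def, smul_eq_mul, mul_one] using r2
    · simpa only [p, z, Subring.smul_def, smul_eq_mul, mul_one] using r3
  have hΩ_eq : Ω = (6⁻¹ : ℂ) • p.casimirNumerator A B C := by
    subst hΩ hx1 hx2 hx3 hx4 hx5 hx6 hx7 hx8 hx9 hx10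
    have coe_ofNat (n : ℕ) [n.AtLeastTwo] : ((ofNat(n) : Subring.center U) : U) = ofNat(n) := rfl
    simp only [casimirNumerator, p, z, Subring.smul_def, smul_eq_mul]
    push_cast [coe_ofNat]
    simp only [smul_mul_assoc, add_mul, mul_add, sub_mul, neg_mul, mul_assoc,
      ← Nat.ofNat_nsmul_eq_mul]
    module
  obtain ⟨hA, hB⟩ := hp.commute_casimirNumerator_A_B
  rw [hΩ_eq]
  exact ⟨(hA.smul_left _).eq, (hB.smul_left _).eq, (hp.commute_casimirNumerator_C.smul_left _).eq⟩
end

section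
/- Let H be the Hahn algebra over ℂ[δ_1, δ_2, ε_1, ε_2, Λ] generated by H_1, H_2 with H_3 := [H_1,H_2], subject to [H_2,H_3] = −2{H_1,H_2} + δ_2 H_2 + δ_1 H_1 + ε_1 and [H_1,H_3] = 2H_1² − δ_2 H_1 + H_2 + ε_2. Then H_3² − (2{H_1²,H_2} − δ_2{H_1,H_2} + 2ε_2 H_2 − (4+δ_1)H_1² + H_2² − 2(ε_1 − δ_2)H_1) is central in H, i.e., it commutes with H_1 and H_2. -/
/-!
Once the central parameters are moved to the front of every monomial, the brackets of `Q` with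
the generators are combinations of the defects `D₁`, `D₂` of the two defining relations:
`⁅H₁, Q⁆ = {D₁, H₃}` and `⁅H₂, Q⁆ = {D₂, H₃} + 2⁅D₂, H₁⁆`. Both vanish in the Hahn algebra.
-/

section Hahn

variable {A : Type*} [Ring A]

def hahnCasimir (d1 d2 e1 e2 H1 H2 : A) : A :=
  ⁅H1, H2⁆ ^ 2 - (2 * (H1 ^ 2 * H2 + H2 * H1 ^ 2) - d2 * (H1 * H2 + H2 * H1) +
    2 * e2 * H2 - (4 + d1) * H1 ^ 2 + H2 ^ 2 - 2 * (e1 - d2) * H1)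

def hahnDefectLeft (d2 e2 H1 H2 : A) : A :=
  ⁅H1, ⁅H1, H2⁆⁆ - (2 * H1 ^ 2 - d2 * H1 + H2 + e2)

def hahnDefectRight (d1 d2 e1 H1 H2 : A) : A :=
  ⁅H2, ⁅H1, H2⁆⁆ - (-(2 * (H1 * H2 + H2 * H1)) + d2 * H2 + d1 * H1 + e1)

variable {d1 d2 e1 e2 : A}

theorem lie_hahnCasimir_left (hd1 : ∀ x, Commute x d1) (hd2 : ∀ x, Commute x d2)
    (he1 : ∀ x, Commute x e1) (he2 : ∀ x, Commute x e2) (H1 H2 : A) :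
    ⁅H1, hahnCasimir d1 d2 e1 e2 H1 H2⁆ =
      hahnDefectLeft d2 e2 H1 H2 * ⁅H1, H2⁆ + ⁅H1, H2⁆ * hahnDefectLeft d2 e2 H1 H2 := by
  simp only [hahnCasimir, hahnDefectLeft, Ring.lie_def]
  noncomm_ring [(hd1 _).eq, (hd2 _).eq, (he1 _).eq, (he2 _).eq,
    (hd1 _).left_comm, (hd2 _).left_comm, (he1 _).left_comm, (he2 _).left_comm]

theorem lie_hahnCasimir_right (hd1 : ∀ x, Commute x d1) (hd2 : ∀ x, Commute x d2)
    (he1 : ∀ x, Commute x e1) (he2 : ∀ x, Commute x e2) (H1 H2 : A) :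
    ⁅H2, hahnCasimir d1 d2 e1 e2 H1 H2⁆ =
      hahnDefectRight d1 d2 e1 H1 H2 * ⁅H1, H2⁆ + ⁅H1, H2⁆ * hahnDefectRight d1 d2 e1 H1 H2
        + 2 * ⁅hahnDefectRight d1 d2 e1 H1 H2, H1⁆ := by
  simp only [hahnCasimir, hahnDefectRight, Ring.lie_def]
  noncomm_ring [(hd1 _).eq, (hd2 _).eq, (he1 _).eq, (he2 _).eq,
    (hd1 _).left_comm, (hd2 _).left_comm, (he1 _).left_comm, (he2 _).left_comm]

end Hahn

theorem hahn_casimir_central_general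
    (U : Type*) [Ring U]
    (H1 H2 H3 d1 d2 e1 e2 : U)
    (hcen : ∀ p ∈ ({d1, d2, e1, e2} : Set U), ∀ x : U, p * x = x * p)
    (hH3 : H3 = H1 * H2 - H2 * H1)
    (h23 : H2 * H3 - H3 * H2 = -(2 * (H1 * H2 + H2 * H1)) + d2 * H2 + d1 * H1 + e1)
    (h13 : H1 * H3 - H3 * H1 = 2 * H1 ^ 2 - d2 * H1 + H2 + e2)
    (Q : U)
    (hQ : Q = H3 ^ 2 - (2 * (H1 ^ 2 * H2 + H2 * H1 ^ 2) - d2 * (H1 * H2 + H2 * H1) +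
      2 * e2 * H2 - (4 + d1) * H1 ^ 2 + H2 ^ 2 - 2 * (e1 - d2) * H1)) :
    Q * H1 = H1 * Q ∧ Q * H2 = H2 * Q := by
  have central : ∀ p ∈ ({d1, d2, e1, e2} : Set U), ∀ x, Commute x p :=
    fun p hp x => (hcen p hp x).symm
  have hd1 := central d1 (by simp)
  have hd2 := central d2 (by simp)
  have he1 := central e1 (by simp)
  have he2 := central e2 (by simp)
  subst hH3
  have hQ' : Q = hahnCasimir d1 d2 e1 e2 H1 H2 := hQ
  have hDL : hahnDefectLeft d2 e2 H1 H2 = 0 := sub_eq_zero.mpr h13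
  have hDR : hahnDefectRight d1 d2 e1 H1 H2 = 0 := sub_eq_zero.mpr h23
  have hL := lie_hahnCasimir_left hd1 hd2 he1 he2 H1 H2
  have hR := lie_hahnCasimir_right hd1 hd2 he1 he2 H1 H2
  simp only [hDL, zero_mul, mul_zero, add_zero, ← hQ'] at hL
  simp only [hDR, zero_mul, mul_zero, (Commute.zero_left H1).lie_eq, add_zero, ← hQ'] at hR
  exact ⟨(commute_iff_lie_eq.mpr hL).eq.symm, (commute_iff_lie_eq.mpr hR).eq.symm⟩

/-- in the Hahn algebra generated by `H₁, H₂` (with `H₃ = [H₁,H₂]` and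
central parameters `δ₁, δ₂, ε₁, ε₂`), the element
`H₃² - (2{H₁²,H₂} - δ₂{H₁,H₂} + 2ε₂H₂ - (4+δ₁)H₁² + H₂² - 2(ε₁-δ₂)H₁)`
is central, i.e. it commutes with `H₁` and `H₂`. -/
theorem hahn_casimir_central
    (U : Type*) [Ring U] [Algebra ℂ U]
    (H1 H2 H3 d1 d2 e1 e2 : U)
    (hcen : ∀ p ∈ ({d1, d2, e1, e2} : Set U), ∀ x : U, p * x = x * p)
    (hH3 : H3 = H1 * H2 - H2 * H1)
    (h23 : H2 * H3 - H3 * H2 = -(2 * (H1 * H2 + H2 * H1)) + d2 * H2 + d1 * H1 + e1)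
    (h13 : H1 * H3 - H3 * H1 = 2 * H1 ^ 2 - d2 * H1 + H2 + e2)
    (Q : U)
    (hQ : Q = H3 ^ 2 - (2 * (H1 ^ 2 * H2 + H2 * H1 ^ 2) - d2 * (H1 * H2 + H2 * H1) +
      2 * e2 * H2 - (4 + d1) * H1 ^ 2 + H2 ^ 2 - 2 * (e1 - d2) * H1)) :
    Q * H1 = H1 * Q ∧ Q * H2 = H2 * Q :=
  hahn_casimir_central_general U H1 H2 H3 d1 d2 e1 e2 hcen hH3 h23 h13 Q hQ
end
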